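/- Let a₁, a₂, α₁, α₂, β₁, β₂, γ₁, γ₂, ξ₁, ξ₂, ξ₃, ξ₄ be real numbers with a₁ ≠ 0, a₂ ≠ 0, a₁² ≠ a₂², satisfying the case L4 conditions. Let C, D ∈ ℝ with D ≠ 0 and define the transformed coefficients a₁' = D³a₁, a₂' = D³a₂, α₁' = D²(α₁ + C(a₁+a₂)), α₂' = D²α₂, β₁' = D²(β₁ + C(a₁+a₂)), β₂' = D²β₂, γ₁' = D²(γ₁ + 2Ca₁), γ₂' = D²(γ₂ + 2Ca₂), ξ₁' = Dξ₁ + (1/2)CD[3C(a₁+a₂) + γ₁ + γ₂ + 2(α₁ − α₂ + β₁)], ξ₂' = Dξ₂ + (1/2)CD[3C(a₁+a₂) + γ₁ + γ₂ + 2(α₁ + α₂ + β₁)], ξ₃' = Dξ₃ + (1/2)CD[C(a₁−a₂) + γ₁ − γ₂ + 2β₂], ξ₄' = Dξ₄ + (1/2)CD[C(a₁−a₂) + γ₁ − γ₂ − 2β₂]. Then the primed coefficients again satisfy the case L4 conditions. Thus the subclass L4 is invariant under restricted Möbius transformations u ↦ u/(Cu+D). -/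
import Mathlib


/-- The case L4 linearizability conditions for the quad-equation `Q₊`. -/
def CaseL4 (a₁ a₂ α₁ α₂ β₁ β₂ γ₁ γ₂ ξ₁ ξ₂ ξ₃ ξ₄ : ℝ) : Prop :=
  α₂ = 0 ∧ β₂ = 0 ∧ 2 * a₁ = a₂ ∧
  γ₁ = 1 / 3 * (α₁ + β₁) ∧ γ₂ = 2 / 3 * (α₁ + β₁) ∧
  ξ₁ = ξ₂ ∧
  ξ₁ = -(-5 * α₁ * β₁ + α₁ ^ 2 + β₁ ^ 2) / (6 * a₁) ∧
  ξ₃ = ξ₄ ∧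
  ξ₃ = (α₁ - 2 * β₁) * (2 * α₁ - β₁) / (18 * a₁)

/-- The subclass L4 is invariant under the restricted Möbius transformations
`u ↦ u/(Cu+D)`, acting on the coefficients of `Q₊` in the standard way. -/
theorem caseL4_moebius_invariant
    (a₁ a₂ α₁ α₂ β₁ β₂ γ₁ γ₂ ξ₁ ξ₂ ξ₃ ξ₄ : ℝ)
    (ha₁ : a₁ ≠ 0) (ha₂ : a₂ ≠ 0) (ha : a₁ ^ 2 ≠ a₂ ^ 2)
    (hcase : CaseL4 a₁ a₂ α₁ α₂ β₁ β₂ γ₁ γ₂ ξ₁ ξ₂ ξ₃ ξ₄)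
    (C D : ℝ) (hD : D ≠ 0) :
    CaseL4
        (D ^ 3 * a₁) (D ^ 3 * a₂)
        (D ^ 2 * (α₁ + C * (a₁ + a₂))) (D ^ 2 * α₂)
        (D ^ 2 * (β₁ + C * (a₁ + a₂))) (D ^ 2 * β₂)
        (D ^ 2 * (γ₁ + 2 * C * a₁)) (D ^ 2 * (γ₂ + 2 * C * a₂))
        (D * ξ₁ + 1 / 2 * C * D *
          (3 * C * (a₁ + a₂) + γ₁ + γ₂ + 2 * (α₁ - α₂ + β₁)))
        (D * ξ₂ + 1 / 2 * C * D *
          (3 * C * (a₁ + a₂) + γ₁ + γ₂ + 2 * (α₁ + α₂ + β₁)))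
        (D * ξ₃ + 1 / 2 * C * D * (C * (a₁ - a₂) + γ₁ - γ₂ + 2 * β₂))
        (D * ξ₄ + 1 / 2 * C * D * (C * (a₁ - a₂) + γ₁ - γ₂ - 2 * β₂)) := by
  obtain ⟨h1, h2, h3, h4, h5, h6, h7, h8, h9⟩ := hcase
  subst h1 h2 h4 h5 h6 h7 h8 h9 h3
  refine ⟨by ring, by ring, by ring, by ring, by ring, by ring, ?_, by ring, ?_⟩ <;>
  · field_simp
    ring
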